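/- Let R be a commutative Noetherian ring and I₁ ⊆ J₁, I₂ ⊆ J₂ ideals with J₁ ∩ J₂ = 0. Then I₁ is nil-essential in J₁ and I₂ is nil-essential in J₂ if and only if I₁ ⊕ I₂ is nil-essential in J₁ ⊕ J₂. -/

import Mathlib

def IdealNilpotentC {A : Type*} [CommRing A] (μ : Ideal A) : Prop :=
  ∃ n : ℕ, 0 < n ∧ μ ^ n = ⊥

def NilEssentialInC {A : Type*} [CommRing A] (I K : Ideal A) : Prop :=
  ∀ μ : Ideal A, μ ≤ K → I ⊓ μ = ⊥ → IdealNilpotentC μ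

/-! If `μ ≤ J₁ ⊔ J₂` then `μ² ≤ μJ₁ + μJ₂ ≤ (μ ⊓ J₁) ⊔ (μ ⊓ J₂)`, and each `μ ⊓ Jᵢ` meets `Iᵢ`
trivially whenever `μ` meets `I₁ ⊔ I₂` trivially; so `μ²`, hence `μ`, is nilpotent.
Conversely, by the modular law `(I₁ ⊔ I₂) ⊓ J₁ = I₁ ⊔ (I₂ ⊓ J₁) = I₁`, so an ideal of `J₁`
meeting `I₁` trivially also meets `I₁ ⊔ I₂` trivially. -/

section

variable {A : Type*} [CommRing A] {μ ν : Ideal A}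

/-- The exponent is required to be positive only to exclude `μ ^ 0 = ⊤`, which is `⊥` only
in the zero ring, where every ideal is nilpotent anyway. -/
theorem idealNilpotentC_iff_isNilpotent : IdealNilpotentC μ ↔ IsNilpotent μ := by
  constructor
  · rintro ⟨n, -, hn⟩
    exact ⟨n, hn⟩
  · rintro ⟨n, hn⟩
    refine ⟨n + 1, n.succ_pos, le_bot_iff.mp ?_⟩
    calc μ ^ (n + 1) = μ ^ n * μ := pow_succ μ n
      _ ≤ μ ^ n := Ideal.mul_le_left
      _ = ⊥ := hn

theorem IdealNilpotentC.of_le (hν : IdealNilpotentC ν) (h : μ ≤ ν) : IdealNilpotentC μ := by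
  obtain ⟨n, hn, hν⟩ := hν
  exact ⟨n, hn, le_bot_iff.mp (hν ▸ Ideal.pow_right_mono h n)⟩

theorem IdealNilpotentC.of_pow {m : ℕ} (h : IdealNilpotentC (μ ^ m)) : IdealNilpotentC μ := by
  rw [idealNilpotentC_iff_isNilpotent] at h ⊢
  exact h.of_pow

theorem IdealNilpotentC.sup (hμ : IdealNilpotentC μ) (hν : IdealNilpotentC ν) :
    IdealNilpotentC (μ ⊔ ν) := by
  rw [idealNilpotentC_iff_isNilpotent] at hμ hν ⊢
  exact (Commute.all μ ν).isNilpotent_add hμ hν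

end

section

variable {A : Type*} [CommRing A] {I₁ I₂ J₁ J₂ K : Ideal A}

theorem NilEssentialInC.sup (h₁ : NilEssentialInC I₁ J₁) (h₂ : NilEssentialInC I₂ J₂) :
    NilEssentialInC (I₁ ⊔ I₂) (J₁ ⊔ J₂) := by
  intro μ hμ hdisj
  have meet_of_le {I J : Ideal A} (hI : I ≤ I₁ ⊔ I₂) : I ⊓ (μ ⊓ J) = ⊥ :=
    le_bot_iff.mp (hdisj ▸ inf_le_inf hI inf_le_left)
  have hnil : IdealNilpotentC (μ ⊓ J₁ ⊔ μ ⊓ J₂) :=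
    (h₁ _ inf_le_right (meet_of_le le_sup_left)).sup (h₂ _ inf_le_right (meet_of_le le_sup_right))
  have hsq : μ ^ 2 ≤ μ ⊓ J₁ ⊔ μ ⊓ J₂ :=
    calc μ ^ 2 = μ * μ := sq μ
      _ ≤ μ * (J₁ ⊔ J₂) := Ideal.mul_mono_right hμ
      _ = μ * J₁ ⊔ μ * J₂ := Submodule.mul_sup μ J₁ J₂
      _ ≤ μ ⊓ J₁ ⊔ μ ⊓ J₂ := sup_le_sup Ideal.mul_le_inf Ideal.mul_le_inf
  exact (hnil.of_le hsq).of_pow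

theorem NilEssentialInC.of_sup_left (h : NilEssentialInC (I₁ ⊔ I₂) K) (hJ : J₁ ≤ K)
    (hI₁ : I₁ ≤ J₁) (hI₂ : I₂ ⊓ J₁ = ⊥) : NilEssentialInC I₁ J₁ := by
  intro μ hμ hdisj
  have hmeet : (I₁ ⊔ I₂) ⊓ J₁ = I₁ := by rw [sup_inf_assoc_of_le I₂ hI₁, hI₂, sup_bot_eq]
  refine h μ (hμ.trans hJ) ?_
  calc (I₁ ⊔ I₂) ⊓ μ = (I₁ ⊔ I₂) ⊓ J₁ ⊓ μ := by rw [inf_assoc, inf_eq_right.mpr hμ]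
    _ = ⊥ := by rw [hmeet, hdisj]

end

theorem stmt14_general {R : Type*} [CommRing R]
    (I₁ I₂ J₁ J₂ : Ideal R) (h₁ : I₁ ≤ J₁) (h₂ : I₂ ≤ J₂) (hJ : J₁ ⊓ J₂ = ⊥) :
    (NilEssentialInC I₁ J₁ ∧ NilEssentialInC I₂ J₂) ↔
      NilEssentialInC (I₁ ⊔ I₂) (J₁ ⊔ J₂) := by
  refine ⟨fun ⟨hI₁, hI₂⟩ ↦ hI₁.sup hI₂, fun h ↦ ⟨?_, ?_⟩⟩
  · exact h.of_sup_left le_sup_left h₁ (eq_bot_mono (inf_le_inf_right J₁ h₂) (inf_comm J₁ J₂ ▸ hJ))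
  · rw [sup_comm] at h
    exact h.of_sup_left le_sup_right h₂ (eq_bot_mono (inf_le_inf_right J₂ h₁) hJ)

theorem stmt14 {R : Type*} [CommRing R] [IsNoetherianRing R]
    (I₁ I₂ J₁ J₂ : Ideal R) (h₁ : I₁ ≤ J₁) (h₂ : I₂ ≤ J₂) (hJ : J₁ ⊓ J₂ = ⊥) :
    (NilEssentialInC I₁ J₁ ∧ NilEssentialInC I₂ J₂) ↔
      NilEssentialInC (I₁ ⊔ I₂) (J₁ ⊔ J₂) :=
  stmt14_general I₁ I₂ J₁ J₂ h₁ h₂ hJ
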